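/- arXiv:2411.17143 — 4 statements merged into one kernel-verified Lean document; each statement's English description precedes it below -/
import Mathlib

section
/- Let k be an infinite field and n ≥ 2 an integer. Every normal subgroup N of SAut_k(A^n) that contains SL_n(k) (embedded as linear automorphisms) also contains every tame automorphism of Jacobian 1. -/
open MvPolynomial

/-- Endomorphisms of affine `n`-space over `R`: `n`-tuples of polynomials in
`R[x_1,…,x_n]`, with composition given by substitution. -/
def PolyEnd (R : Type*) [CommRing R] (n : ℕ) : Type _ := Fin n → MvPolynomial (Fin n) R

namespace PolyEnd

variable {R S : Type*} [CommRing R] [CommRing S] {n : ℕ}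

noncomputable instance : Monoid (PolyEnd R n) where
  one := fun i => X i
  mul f g := fun i => bind₁ g (f i)
  mul_assoc f g h := funext fun i => by
    show bind₁ h (bind₁ g (f i)) = bind₁ (fun j => bind₁ h (g j)) (f i)
    exact bind₁_bind₁ g h (f i)
  one_mul f := funext fun i => by
    show bind₁ f (X i) = f i
    exact bind₁_X_right f i
  mul_one f := funext fun i => by
    show bind₁ X (f i) = f i
    rw [bind₁_X_left, AlgHom.id_apply]

@[simp] lemma mul_apply (f g : PolyEnd R n) (i : Fin n) :
    (f * g) i = bind₁ g (f i) := rfl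

@[simp] lemma one_apply (i : Fin n) : (1 : PolyEnd R n) i = X i := rfl

/-- The Jacobian determinant of an endomorphism. -/
noncomputable def jac (f : PolyEnd R n) : MvPolynomial (Fin n) R :=
  (Matrix.of fun i j => pderiv j (f i)).det

/-- The chain rule for partial derivatives of a substitution. -/
lemma pderiv_bind₁ (g : Fin n → MvPolynomial (Fin n) R)
    (p : MvPolynomial (Fin n) R) (j : Fin n) :
    pderiv j (bind₁ g p) = ∑ i, bind₁ g (pderiv i p) * pderiv j (g i) := by
  induction p using MvPolynomial.induction_on with
  | C a => simp
  | add p q hp hq => simp [hp, hq, Finset.sum_add_distrib, add_mul]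
  | mul_X p i hp =>
      rw [map_mul, bind₁_X_right, pderiv_mul, hp]
      have key : ∀ l : Fin n, bind₁ g (pderiv l (p * X i)) * pderiv j (g l)
          = bind₁ g (pderiv l p) * pderiv j (g l) * g i
            + (if l = i then bind₁ g p * pderiv j (g i) else 0) := by
        intro l
        rw [pderiv_mul, pderiv_X]
        by_cases h : l = i
        · subst h
          simp only [Pi.single_apply, if_pos rfl, map_add, map_mul, bind₁_X_right,
            bind₁_C_right, if_pos rfl]
          ring_nf
          simp [mul_comm, mul_left_comm, mul_assoc]
        · simp only [Pi.single_apply, if_neg (Ne.symm h), if_neg h, mul_zero, map_mul,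
            map_add, map_zero, add_zero, bind₁_X_right]
          ring
      rw [Finset.sum_congr rfl fun l _ => key l, Finset.sum_add_distrib]
      simp [Finset.sum_mul]

lemma jac_one : jac (1 : PolyEnd R n) = 1 := by
  unfold jac
  have : (Matrix.of fun i j => pderiv j ((1 : PolyEnd R n) i))
      = (1 : Matrix (Fin n) (Fin n) (MvPolynomial (Fin n) R)) := by
    ext i j
    simp [Matrix.one_apply, pderiv_X, Pi.single_apply, eq_comm]
  rw [this, Matrix.det_one]

/-- The chain rule for Jacobians. -/
lemma jac_mul (f g : PolyEnd R n) : jac (f * g) = bind₁ g (jac f) * jac g := by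
  unfold jac
  have : (Matrix.of fun i j => pderiv j ((f * g) i))
      = (Matrix.of fun i l => pderiv l (f i)).map (bind₁ g)
        * (Matrix.of fun l j => pderiv j (g l)) := by
    refine Matrix.ext fun i j => ?_
    show pderiv j (bind₁ g (f i)) = ∑ l, bind₁ g (pderiv l (f i)) * pderiv j (g l)
    exact pderiv_bind₁ g (f i) j
  rw [this, Matrix.det_mul]
  congr 1
  exact ((bind₁ g).map_det (Matrix.of fun i l => pderiv l (f i))).symm

end PolyEnd

/-- Automorphisms of affine `n`-space over `R` : endomorphisms admitting a two-sided
compositional inverse. -/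
abbrev PolyAut (R : Type*) [CommRing R] (n : ℕ) := (PolyEnd R n)ˣ

namespace PolyAut

variable {R S : Type*} [CommRing R] [CommRing S] {n : ℕ}

lemma bind₁_val_injective (f : PolyAut R n) :
    Function.Injective (bind₁ (σ := Fin n) (f.val : Fin n → MvPolynomial (Fin n) R)) := by
  intro p q h
  have hinv : ∀ r : MvPolynomial (Fin n) R, bind₁ (f.inv : Fin n → _) (bind₁ (f.val : Fin n → _) r) = r := by
    intro r
    have e : (fun i => bind₁ (f.inv : Fin n → _) ((f.val : Fin n → _) i))
        = (X : Fin n → MvPolynomial (Fin n) R) := f.val_inv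
    refine (bind₁_bind₁ (f.val : Fin n → MvPolynomial (Fin n) R)
      (f.inv : Fin n → MvPolynomial (Fin n) R) r).trans ?_
    calc _ = bind₁ (X : Fin n → MvPolynomial (Fin n) R) r := congrArg (fun g => bind₁ g r) e
      _ = r := by rw [bind₁_X_left, AlgHom.id_apply]
  calc p = bind₁ (f.inv : Fin n → _) (bind₁ (f.val : Fin n → _) p) := (hinv p).symm
    _ = bind₁ (f.inv : Fin n → _) (bind₁ (f.val : Fin n → _) q) := by rw [h]
    _ = q := hinv q

end PolyAut

/-- The subgroup of automorphisms of Jacobian `1`. -/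
noncomputable def SAutGrp (R : Type*) [CommRing R] (n : ℕ) : Subgroup (PolyAut R n) where
  carrier := {f | PolyEnd.jac f.val = 1}
  one_mem' := PolyEnd.jac_one
  mul_mem' := by
    intro f g hf hg
    show PolyEnd.jac (f.val * g.val) = 1
    rw [PolyEnd.jac_mul, hf, hg, map_one, one_mul]
  inv_mem' := by
    intro f hf
    show PolyEnd.jac f.inv = 1
    apply PolyAut.bind₁_val_injective f
    have h1 : PolyEnd.jac (f.inv * f.val) = 1 := by
      rw [f.inv_val]; exact PolyEnd.jac_one
    rw [PolyEnd.jac_mul, hf, mul_one] at h1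
    rw [map_one]
    exact h1

lemma mem_SAutGrp_iff {R : Type*} [CommRing R] {n : ℕ} (f : PolyAut R n) :
    f ∈ SAutGrp R n ↔ PolyEnd.jac f.val = 1 := Iff.rfl

section Translations

variable {R : Type*} [CommRing R] {n : ℕ}

/-- The translation endomorphism `(x_1 + c_1, …, x_n + c_n)`. -/
noncomputable def translEnd (c : Fin n → R) : PolyEnd R n := fun i => X i + C (c i)

lemma translEnd_mul (c d : Fin n → R) :
    translEnd c * translEnd d = translEnd (c + d) := by
  funext i
  show bind₁ (translEnd d) (translEnd c i) = translEnd (c + d) i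
  simp only [translEnd, map_add, bind₁_C_right]
  rw [show bind₁ (translEnd d) (X i) = translEnd d i from bind₁_X_right _ i]
  rw [show bind₁ (translEnd d) (C (c i)) = C (c i) from bind₁_C_right _ _]
  show X i + C (d i) + C (c i) = X i + C (c i + d i)
  rw [map_add]; ring

lemma translEnd_zero : translEnd (0 : Fin n → R) = 1 := by
  funext i
  show X i + C 0 = X i
  simp

/-- The translation automorphism `(x_1 + c_1, …, x_n + c_n)`. -/
noncomputable def transl (c : Fin n → R) : PolyAut R n where
  val := translEnd c
  inv := translEnd (-c)
  val_inv := by rw [translEnd_mul, add_neg_cancel, translEnd_zero]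
  inv_val := by rw [translEnd_mul, neg_add_cancel, translEnd_zero]

@[simp] lemma transl_val (c : Fin n → R) : (transl c).val = translEnd c := rfl

lemma jac_translEnd (c : Fin n → R) : PolyEnd.jac (translEnd c) = 1 := by
  unfold PolyEnd.jac
  have : (Matrix.of fun i j => pderiv j (translEnd c i))
      = (1 : Matrix (Fin n) (Fin n) (MvPolynomial (Fin n) R)) := by
    ext i j
    simp [translEnd, Matrix.one_apply, pderiv_X, Pi.single_apply, eq_comm]
  rw [this, Matrix.det_one]

lemma transl_mem_SAutGrp (c : Fin n → R) : transl c ∈ SAutGrp R n := jac_translEnd c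

/-- The translation as element of `SAut`. -/
noncomputable def translS (c : Fin n → R) : ↥(SAutGrp R n) := ⟨transl c, transl_mem_SAutGrp c⟩

/-- `f` is a translation. -/
def IsTranslation (f : PolyAut R n) : Prop := ∃ c : Fin n → R, f = transl c

end Translations

section Linear

variable {R : Type*} [CommRing R] {n : ℕ}

/-- The linear endomorphism associated with a matrix. -/
noncomputable def linEnd (M : Matrix (Fin n) (Fin n) R) : PolyEnd R n :=
  fun i => ∑ j, C (M i j) * X j

/-- `f` is a linear automorphism (i.e. in the image of `GL_n`). -/
def IsLinear (f : PolyAut R n) : Prop := ∃ M : Matrix (Fin n) (Fin n) R, f.val = linEnd M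

/-- `f` is a linear automorphism given by a matrix of determinant 1
(i.e. in the image of `SL_n`). -/
def MemSL (f : PolyAut R n) : Prop :=
  ∃ M : Matrix (Fin n) (Fin n) R, M.det = 1 ∧ f.val = linEnd M

/-- `f` is a triangular automorphism. -/
def IsTriangular (f : PolyAut R n) : Prop :=
  ∃ (a : Fin n → Rˣ) (b : Fin n → MvPolynomial (Fin n) R),
    (∀ i : Fin n, b i ∈ MvPolynomial.supported R {j : Fin n | (j : ℕ) < (i : ℕ)}) ∧
    ∀ i : Fin n, f.val i = C ((a i : R)) * X i + b i

/-- The tame subgroup, generated by linear and triangular automorphisms. -/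
noncomputable def TameGrp (R : Type*) [CommRing R] (n : ℕ) : Subgroup (PolyAut R n) :=
  Subgroup.closure {f | IsLinear f ∨ IsTriangular f}

end Linear

section Map

variable {R S : Type*} [CommRing R] [CommRing S] {n : ℕ}

/-- Applying a ring homomorphism to all coefficients, as a monoid homomorphism of
endomorphisms of affine `n`-space. -/
noncomputable def endMapHom (φ : R →+* S) : PolyEnd R n →* PolyEnd S n where
  toFun f := fun i => MvPolynomial.map φ (f i)
  map_one' := funext fun i => by
    show MvPolynomial.map φ (X i) = X i
    simp
  map_mul' f g := funext fun i => by
    show MvPolynomial.map φ (bind₁ g (f i)) = bind₁ (fun j => MvPolynomial.map φ (g j)) (MvPolynomial.map φ (f i))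
    apply map_bind₁

/-- Applying a ring homomorphism to all coefficients, on automorphisms. -/
noncomputable def autMap (φ : R →+* S) : PolyAut R n →* PolyAut S n :=
  Units.map (endMapHom φ)

lemma jac_endMapHom (φ : R →+* S) (f : PolyEnd R n) :
    PolyEnd.jac (endMapHom φ f) = MvPolynomial.map φ (PolyEnd.jac f) := by
  unfold PolyEnd.jac
  have : (Matrix.of fun i j => pderiv j ((endMapHom φ f) i))
      = (Matrix.of fun i j => pderiv j (f i)).map (MvPolynomial.map φ) :=
    Matrix.ext fun i j => by
      simp only [Matrix.of_apply, Matrix.map_apply]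
      exact pderiv_map
  rw [this, RingHom.map_det]
  rfl

/-- Specialisation of an automorphism over `R[t]` at a value `t₀ ∈ R`. -/
noncomputable def specAut (t0 : R) : PolyAut (Polynomial R) n →* PolyAut R n :=
  autMap (Polynomial.evalRingHom t0)

lemma specAut_mem_SAutGrp (h : PolyAut (Polynomial R) n)
    (hh : h ∈ SAutGrp (Polynomial R) n) (t0 : R) :
    specAut t0 h ∈ SAutGrp R n := by
  show PolyEnd.jac ((specAut t0 h).val) = 1
  have : (specAut t0 h).val = endMapHom (Polynomial.evalRingHom t0) h.val := rfl
  rw [this, jac_endMapHom, hh, map_one]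

/-- Specialisation, from `SAut` over `R[t]` to `SAut` over `R`. -/
noncomputable def specSAut (t0 : R) (h : PolyAut (Polynomial R) n)
    (hh : h ∈ SAutGrp (Polynomial R) n) : ↥(SAutGrp R n) :=
  ⟨specAut t0 h, specAut_mem_SAutGrp h hh t0⟩

/-- A subgroup `N` of `SAut_k(𝔸ⁿ)` is closed under specialisation if for every
automorphism `h` over `k[t]` of Jacobian `1` all of whose specialisations at
`t₀ ≠ 0` lie in `N`, the specialisation at `0` also lies in `N`. Every subgroup
that is closed in the ind-topology has this property. -/
def ClosedUnderSpec {R : Type*} [CommRing R] {n : ℕ} (N : Subgroup ↥(SAutGrp R n)) : Prop :=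
  ∀ (h : PolyAut (Polynomial R) n) (hh : h ∈ SAutGrp (Polynomial R) n),
    (∀ t0 : R, t0 ≠ 0 → specSAut t0 h hh ∈ N) → specSAut 0 h hh ∈ N

/-- A subgroup `N` of `Aut_k(𝔸ⁿ)` is closed under specialisation if for every
automorphism `h` over `k[t]` all of whose specialisations at `t₀ ≠ 0` lie in `N`,
the specialisation at `0` also lies in `N`. -/
def ClosedUnderSpecAut {R : Type*} [CommRing R] {n : ℕ} (N : Subgroup (PolyAut R n)) : Prop :=
  ∀ h : PolyAut (Polynomial R) n,
    (∀ t0 : R, t0 ≠ 0 → specAut t0 h ∈ N) → specAut 0 h ∈ N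

end Map

/-!
The Jacobian of an automorphism over a reduced ring is a constant unit `c`, and
`f ↦ diag(c, 1, …, 1)` is a homomorphism. Composing a linear or triangular generator of the
tame group with the inverse of its diagonal gives a linear or triangular automorphism of
Jacobian 1, and diagonal automorphisms normalise the subgroup these generate; hence every tame
automorphism of Jacobian 1 lies in that subgroup. Linear ones of Jacobian 1 are in `SL_n`. A
triangular one of Jacobian 1 is a diagonal element of `SL_n` times a product of elementary maps
`x_i ↦ x_i + c x^m` with `m_i = 0`. Conjugating such a map by `diag(a, a⁻¹)` (on the coordinates
`i ≠ j`) multiplies `c` by `a ^ (m_j + 1)`; as `k` is infinite this factor can be made `≠ 1`, so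
each elementary map is a product of an element of `SL_n` and a conjugate of one, and lies in
every normal subgroup of `SAut` containing `SL_n`.
-/

namespace PolyEnd

variable {R : Type*} [CommRing R] {n : ℕ}

-- `PolyEnd` is not reducible, so `bind₁_X_right` and `bind₁_C_right` do not fire on it.
@[simp] lemma bind₁_X (f : PolyEnd R n) (i : Fin n) : bind₁ f (X i) = f i := bind₁_X_right f i

@[simp] lemma bind₁_C (f : PolyEnd R n) (r : R) : bind₁ f (C r) = C r := bind₁_C_right f r

lemma linEnd_mul (A B : Matrix (Fin n) (Fin n) R) : linEnd A * linEnd B = linEnd (A * B) := by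
  funext i
  simp only [mul_apply, linEnd, map_sum, map_mul, bind₁_C, bind₁_X, Finset.mul_sum,
    Matrix.mul_apply, Finset.sum_mul, ← mul_assoc]
  rw [Finset.sum_comm]

lemma linEnd_one : linEnd (1 : Matrix (Fin n) (Fin n) R) = 1 := by
  funext i
  simp [linEnd, Matrix.one_apply]

lemma linEnd_diagonal (d : Fin n → R) : linEnd (Matrix.diagonal d) = fun l => C (d l) * X l := by
  funext i
  simp [linEnd, Matrix.diagonal_apply, apply_ite C, ite_mul]

noncomputable def linEndHom : Matrix (Fin n) (Fin n) R →* PolyEnd R n where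
  toFun := linEnd
  map_one' := linEnd_one
  map_mul' A B := (linEnd_mul A B).symm

lemma jac_linEnd (M : Matrix (Fin n) (Fin n) R) : jac (linEnd M) = C M.det := by
  have : (Matrix.of fun i j => pderiv j (linEnd M i)) = (C : R →+* _).mapMatrix M := by
    ext i j
    simp [linEnd, pderiv_X, Pi.single_apply]
  rw [jac, this, ← RingHom.map_det]

end PolyEnd

section Automorphisms

open PolyEnd

variable {R : Type*} [CommRing R] {n : ℕ}

noncomputable def diagAut : (Fin n → Rˣ) →* PolyAut R n :=
  (Units.map (linEndHom.comp (Matrix.diagonalRingHom (Fin n) R).toMonoidHom)).comp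
    MulEquiv.piUnits.symm.toMonoidHom

lemma diagAut_val_eq_linEnd (u : Fin n → Rˣ) :
    (diagAut u).val = linEnd (Matrix.diagonal fun l => (u l : R)) := rfl

lemma diagAut_val (u : Fin n → Rˣ) : (diagAut u).val = fun l => C (u l : R) * X l := by
  rw [diagAut_val_eq_linEnd, linEnd_diagonal]

lemma diagAut_val_apply (u : Fin n → Rˣ) (l : Fin n) : (diagAut u).val l = C (u l : R) * X l := by
  rw [diagAut_val]

lemma diagAut_mul_val_apply (u : Fin n → Rˣ) (f : PolyAut R n) (l : Fin n) :
    (diagAut u * f).val l = C (u l : R) * f.val l := by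
  simp [diagAut_val_apply]

lemma isLinear_diagAut (u : Fin n → Rˣ) : IsLinear (diagAut u) := ⟨_, diagAut_val_eq_linEnd u⟩

lemma IsLinear.mul {f g : PolyAut R n} (hf : IsLinear f) (hg : IsLinear g) : IsLinear (f * g) := by
  obtain ⟨A, hA⟩ := hf
  obtain ⟨B, hB⟩ := hg
  exact ⟨A * B, by rw [Units.val_mul, hA, hB, linEnd_mul]⟩

lemma isTriangular_diagAut (u : Fin n → Rˣ) : IsTriangular (diagAut u) :=
  ⟨u, 0, fun _ => Subalgebra.zero_mem _, fun l => by
    rw [diagAut_val_apply, Pi.zero_apply, add_zero]⟩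

lemma bind₁_mem_supported {s t : Set (Fin n)} {g : PolyEnd R n} {p : MvPolynomial (Fin n) R}
    (hp : p ∈ supported R s) (hg : ∀ j ∈ s, g j ∈ supported R t) : bind₁ g p ∈ supported R t := by
  have hmap : (supported R s).map (bind₁ g) ≤ supported R t := by
    rw [supported_eq_adjoin_X, AlgHom.map_adjoin, Algebra.adjoin_le_iff]
    rintro _ ⟨_, ⟨j, hj, rfl⟩, rfl⟩
    simpa using hg j hj
  exact hmap ⟨p, hp, rfl⟩

lemma C_mul_mem_supported {s : Set (Fin n)} (r : R) {p : MvPolynomial (Fin n) R}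
    (hp : p ∈ supported R s) : C r * p ∈ supported R s := by
  rw [C_mul']
  exact Subalgebra.smul_mem _ hp r

lemma IsTriangular.mul {f g : PolyAut R n} (hf : IsTriangular f) (hg : IsTriangular g) :
    IsTriangular (f * g) := by
  obtain ⟨a, b, hb, hf⟩ := hf
  obtain ⟨a', b', hb', hg⟩ := hg
  refine ⟨a * a', fun l => C (a l : R) * b' l + bind₁ g.val (b l), fun l => ?_, fun l => ?_⟩
  · refine Subalgebra.add_mem _ (C_mul_mem_supported _ (hb' l)) ?_
    refine bind₁_mem_supported (hb l) fun j hj => ?_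
    rw [hg]
    have hX : X j ∈ supported R {i : Fin n | (i : ℕ) < l} := Algebra.subset_adjoin ⟨j, hj, rfl⟩
    have hb'j : b' j ∈ supported R {i : Fin n | (i : ℕ) < l} := by
      refine supported_mono ?_ (hb' j)
      intro i hi
      exact lt_trans (α := ℕ) hi hj
    exact Subalgebra.add_mem _ (C_mul_mem_supported _ hX) hb'j
  · simp only [Units.val_mul, PolyEnd.mul_apply, hf, hg, map_add, map_mul, bind₁_C, bind₁_X,
      Pi.mul_apply]
    ring

end Automorphisms

section Jacobian

open PolyEnd

variable {R : Type*} [CommRing R] {n : ℕ}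

lemma isUnit_jac (f : PolyAut R n) : IsUnit (jac f.val) := by
  refine IsUnit.of_mul_eq_one_right (bind₁ f.val (jac f.inv)) ?_
  rw [← jac_mul, f.inv_val, jac_one]

variable [IsReduced R]

lemma jac_eq_C_constantCoeff (f : PolyAut R n) : jac f.val = C (constantCoeff (jac f.val)) := by
  obtain ⟨r, -, hr⟩ := isUnit_iff_eq_C_of_isReduced.1 (isUnit_jac f)
  rw [hr, constantCoeff_C]

noncomputable def jacUnit : PolyAut R n →* Rˣ where
  toFun f := ((isUnit_jac f).map constantCoeff).unit
  map_one' := Units.ext <| by simp [jac_one]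
  map_mul' f g := Units.ext <| by
    simp only [IsUnit.unit_spec, Units.val_mul, jac_mul]
    rw [jac_eq_C_constantCoeff f]
    simp

lemma C_jacUnit (f : PolyAut R n) : C (jacUnit f : R) = jac f.val :=
  (jac_eq_C_constantCoeff f).symm

lemma ker_jacUnit : (jacUnit : PolyAut R n →* Rˣ).ker = SAutGrp R n := by
  ext f
  rw [MonoidHom.mem_ker, mem_SAutGrp_iff, ← C_jacUnit, ← map_one C, C_inj, Units.val_eq_one]

instance : (SAutGrp R n).Normal := ker_jacUnit (R := R) (n := n) ▸ MonoidHom.normal_ker _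

lemma jacUnit_diagAut (u : Fin n → Rˣ) : jacUnit (diagAut u) = ∏ l, u l := by
  refine Units.ext (C_injective (Fin n) R ?_)
  rw [C_jacUnit, diagAut_val_eq_linEnd, jac_linEnd, Matrix.det_diagonal, Units.coe_prod]

end Jacobian

section Elementary

open PolyEnd

variable {R : Type*} [CommRing R] {n : ℕ}

noncomputable def elemEnd (i : Fin n) (p : MvPolynomial (Fin n) R) : PolyEnd R n :=
  fun l => X l + (Pi.single i p : Fin n → MvPolynomial (Fin n) R) l

lemma bind₁_elemEnd_of_notMem_vars {i : Fin n} (p : MvPolynomial (Fin n) R)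
    {q : MvPolynomial (Fin n) R} (hq : i ∉ q.vars) : bind₁ (elemEnd i p) q = q := by
  refine hom_congr_vars (f₁ := (bind₁ (elemEnd i p)).toRingHom) (f₂ := RingHom.id _) ?_
    (fun j hj _ => ?_) rfl
  · ext r
    simp
  · simp [elemEnd, show j ≠ i from fun h => hq (h ▸ hj)]

lemma elemEnd_mul {i : Fin n} {p : MvPolynomial (Fin n) R} (hp : i ∉ p.vars)
    (q : MvPolynomial (Fin n) R) : elemEnd i p * elemEnd i q = elemEnd i (p + q) := by
  funext l
  by_cases hl : l = i
  · subst hl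
    simp only [mul_apply, elemEnd, Pi.single_eq_same, map_add, bind₁_X,
      bind₁_elemEnd_of_notMem_vars q hp]
    ring
  · simp [elemEnd, hl]

lemma elemEnd_zero (i : Fin n) : elemEnd i (0 : MvPolynomial (Fin n) R) = 1 := by
  funext l
  simp [elemEnd]

noncomputable def elemAut (i : Fin n) (p : MvPolynomial (Fin n) R) (hp : i ∉ p.vars) :
    PolyAut R n where
  val := elemEnd i p
  inv := elemEnd i (-p)
  val_inv := by rw [elemEnd_mul hp, add_neg_cancel, elemEnd_zero]
  inv_val := by rw [elemEnd_mul (by rwa [vars_neg]), neg_add_cancel, elemEnd_zero]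

@[simp] lemma elemAut_val (i : Fin n) (p : MvPolynomial (Fin n) R) (hp : i ∉ p.vars) :
    (elemAut i p hp).val = elemEnd i p := rfl

lemma elemAut_congr {i : Fin n} {p q : MvPolynomial (Fin n) R} (hp : i ∉ p.vars) (hq : i ∉ q.vars)
    (h : p = q) : elemAut i p hp = elemAut i q hq := by
  subst h
  rfl

lemma elemAut_add {i : Fin n} {p q : MvPolynomial (Fin n) R} (hp : i ∉ p.vars) (hq : i ∉ q.vars)
    (hpq : i ∉ (p + q).vars) : elemAut i (p + q) hpq = elemAut i p hp * elemAut i q hq :=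
  Units.ext (elemEnd_mul hp q).symm

lemma jac_elemEnd {i : Fin n} {p : MvPolynomial (Fin n) R} (hp : i ∉ p.vars) :
    jac (elemEnd i p) = 1 := by
  have : (Matrix.of fun l j => pderiv j (elemEnd i p l))
      = 1 + Matrix.replicateCol Unit (Pi.single i 1 : Fin n → MvPolynomial (Fin n) R)
        * Matrix.replicateRow Unit (pderiv · p) := by
    refine Matrix.ext fun l j => ?_
    by_cases hl : l = i
    · subst hl
      simp [elemEnd, pderiv_X, Matrix.one_apply, Matrix.mul_apply, Pi.single_apply, eq_comm]
    · simp [elemEnd, pderiv_X, Matrix.one_apply, Matrix.mul_apply, Pi.single_apply, hl]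
  rw [jac, this, Matrix.det_one_add_replicateCol_mul_replicateRow, dotProduct_single, mul_one,
    pderiv_eq_zero_of_notMem_vars hp, add_zero]

lemma elemAut_mem_SAutGrp {i : Fin n} {p : MvPolynomial (Fin n) R} (hp : i ∉ p.vars) :
    elemAut i p hp ∈ SAutGrp R n :=
  jac_elemEnd hp

lemma notMem_vars_monomial {i : Fin n} {m : Fin n →₀ ℕ} (hm : m i = 0) (c : R) :
    i ∉ (monomial m c).vars := by
  intro h
  obtain ⟨d, hd, hid⟩ := (mem_vars_iff_mem_support i).1 h
  rw [Finset.mem_singleton.1 (support_monomial_subset hd)] at hid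
  exact Finsupp.mem_support_iff.1 hid hm

lemma notMem_vars_rename_val {i : Fin n} (q : MvPolynomial {j // j ≠ i} R) :
    i ∉ (rename Subtype.val q).vars := by
  classical
  intro h
  obtain ⟨j, -, hj⟩ := Finset.mem_image.1 (vars_rename _ _ h)
  exact j.2 hj

lemma elemAut_mem_of_forall_monomial {G : Subgroup (PolyAut R n)} {i : Fin n}
    (hG : ∀ (m : Fin n →₀ ℕ) (c : R) (hm : m i = 0),
      elemAut i (monomial m c) (notMem_vars_monomial hm c) ∈ G)
    {p : MvPolynomial (Fin n) R} (hp : i ∉ p.vars) : elemAut i p hp ∈ G := by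
  -- as a polynomial in the variables `≠ i`, `p` splits into monomials without losing `i ∉ vars`
  obtain ⟨q, rfl⟩ := exists_rename_eq_of_vars_subset_range p (Subtype.val : {j // j ≠ i} → Fin n)
    Subtype.val_injective fun j hj => ⟨⟨j, fun h => hp (h ▸ hj)⟩, rfl⟩
  induction q using MvPolynomial.induction_on' with
  | monomial u a =>
    rw [elemAut_congr _ _ (rename_monomial _ u a)]
    exact hG _ a (Finsupp.mapDomain_of_notMem_range _ _ (by simp))
  | add q q' hq hq' =>
    have hsum := notMem_vars_rename_val (q + q')
    rw [map_add] at hsum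
    rw [elemAut_congr _ hsum (map_add _ q q'),
      elemAut_add (notMem_vars_rename_val q) (notMem_vars_rename_val q')]
    exact mul_mem (hq _) (hq' _)

end Elementary

section Triangular

open PolyEnd

variable {R : Type*} [CommRing R] {n : ℕ}

lemma val_mul_elemAut_inv {i : Fin n} {b : Fin n → MvPolynomial (Fin n) R}
    (hb : ∀ l, i ∉ (b l).vars) {u : PolyAut R n} (hu : u.val = fun l => X l + b l) :
    (u * (elemAut i (b i) (hb i))⁻¹).val = fun l => X l + Function.update b i 0 l := by
  funext l
  have hinv : (elemAut i (b i) (hb i))⁻¹.val = elemEnd i (-b i) := rfl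
  rw [Units.val_mul, hinv, mul_apply, hu, map_add, bind₁_X, bind₁_elemEnd_of_notMem_vars _ (hb l)]
  by_cases hl : l = i
  · subst hl
    simp [elemEnd]
  · simp [elemEnd, hl]

lemma unitriangular_mem {G : Subgroup (PolyAut R n)}
    (hG : ∀ (i : Fin n) (p : MvPolynomial (Fin n) R) (hp : i ∉ p.vars), elemAut i p hp ∈ G)
    {b : Fin n → MvPolynomial (Fin n) R}
    (hb : ∀ l : Fin n, b l ∈ supported R {j : Fin n | (j : ℕ) < l})
    {u : PolyAut R n} (hu : u.val = fun l => X l + b l) : u ∈ G := by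
  suffices ∀ m : ℕ, ∀ b : Fin n → MvPolynomial (Fin n) R,
      (∀ l : Fin n, b l ∈ supported R {j : Fin n | (j : ℕ) < l}) → (∀ l : Fin n, m ≤ l → b l = 0) →
      ∀ u : PolyAut R n, u.val = (fun l => X l + b l) → u ∈ G from
    this n b hb (fun l hl => absurd l.2 (by omega)) u hu
  intro m
  induction m with
  | zero =>
    intro b _ hzero u hu
    convert G.one_mem
    exact Units.ext (hu.trans (funext fun l => by simp [hzero l (Nat.zero_le _)]))
  | succ m ih =>
    intro b hb hzero u hu
    by_cases hm : m < n
    · set i : Fin n := ⟨m, hm⟩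
      have hvars : ∀ l, i ∉ (b l).vars := by
        intro l hl
        by_cases hil : (i : ℕ) < l
        · simp [hzero l hil] at hl
        · exact hil (mem_supported.1 (hb l) hl)
      have hrest : u * (elemAut i (b i) (hvars i))⁻¹ ∈ G := by
        refine ih _ (fun l => ?_) (fun l hl => ?_) _ (val_mul_elemAut_inv hvars hu)
        · by_cases hl : l = i
          · simp [hl]
          · simpa [hl] using hb l
        · by_cases hl' : l = i
          · simp [hl']
          · have : (l : ℕ) ≠ m := Fin.val_ne_of_ne hl'
            simpa [hl'] using hzero l (by omega)
      simpa using mul_mem hrest (hG i (b i) (hvars i))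
    · exact ih b hb (fun l hl => absurd l.2 (by omega)) u hu

lemma IsTriangular.exists_diagAut_inv_mul {f : PolyAut R n} (hf : IsTriangular f) :
    ∃ (a : Fin n → Rˣ) (b : Fin n → MvPolynomial (Fin n) R),
      (∀ l : Fin n, b l ∈ supported R {j : Fin n | (j : ℕ) < l}) ∧
      ((diagAut a)⁻¹ * f).val = fun l => X l + b l := by
  obtain ⟨a, b, hb, hf⟩ := hf
  refine ⟨a, fun l => C (((a l)⁻¹ : Rˣ) : R) * b l, fun l => C_mul_mem_supported _ (hb l),
    funext fun l => ?_⟩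
  rw [← map_inv, diagAut_mul_val_apply, hf, mul_add, ← mul_assoc, ← map_mul]
  simp

end Triangular

section Conjugation

open PolyEnd

variable {R : Type*} [CommRing R] {n : ℕ}

lemma diagAut_mul_elemAut_mul_inv_val (u : Fin n → Rˣ) {i : Fin n} {p : MvPolynomial (Fin n) R}
    (hp : i ∉ p.vars) :
    (diagAut u * elemAut i p hp * (diagAut u)⁻¹).val
      = elemEnd i (C (u i : R) * bind₁ (diagAut u⁻¹).val p) := by
  funext l
  rw [← map_inv diagAut u, Units.val_mul, mul_apply, diagAut_mul_val_apply, elemAut_val,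
    diagAut_val]
  by_cases hl : l = i
  · subst hl
    simp [elemEnd, mul_add, ← mul_assoc, ← C_mul]
  · simp [elemEnd, hl, ← mul_assoc, ← C_mul]

lemma bind₁_diagAut_monomial (u : Fin n → Rˣ) (m : Fin n →₀ ℕ) (c : R) :
    bind₁ (diagAut u).val (monomial m c) = monomial m (c * m.prod fun l e => (u l : R) ^ e) := by
  rw [diagAut_val, bind₁_monomial]
  simp only [mul_pow, Finset.prod_mul_distrib, monomial_eq, Finsupp.prod, map_mul,
    map_prod, map_pow]
  ring

end Conjugation

lemma exists_units_pow_ne_one (k : Type*) [Field k] [Infinite k] {d : ℕ} (hd : d ≠ 0) :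
    ∃ a : kˣ, (a : k) ^ d ≠ 1 := by
  classical
  obtain ⟨a, ha⟩ :=
    Infinite.exists_notMem_finset (insert 0 (Polynomial.nthRoots d (1 : k)).toFinset)
  simp only [Finset.mem_insert, Multiset.mem_toFinset,
    Polynomial.mem_nthRoots (Nat.pos_of_ne_zero hd), not_or] at ha
  exact ⟨Units.mk0 a ha.1, ha.2⟩

lemma elemAut_monomial_mem {k : Type*} [Field k] [Infinite k] {n : ℕ} {G : Subgroup (PolyAut k n)}
    (hconj : ∀ g ∈ SAutGrp k n, ∀ x ∈ G, g * x * g⁻¹ ∈ G)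
    (hdiag : ∀ u : Fin n → kˣ, ∏ l, u l = 1 → diagAut u ∈ G) {i j : Fin n} (hij : i ≠ j)
    (m : Fin n →₀ ℕ) (c : k) (hm : m i = 0) :
    elemAut i (monomial m c) (notMem_vars_monomial hm c) ∈ G := by
  obtain ⟨a, ha⟩ := exists_units_pow_ne_one k (d := m j + 1) (by omega)
  set u : Fin n → kˣ := Pi.mulSingle i a * Pi.mulSingle j a⁻¹
  have hu : ∏ l, u l = 1 := by simp [u, Finset.prod_mul_distrib]
  set c' := c / ((a : k) ^ (m j + 1) - 1)
  set e := elemAut i (monomial m c') (notMem_vars_monomial hm c')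
  have hweight : (m.prod fun l d => (((u⁻¹) l : kˣ) : k) ^ d) = (a : k) ^ m j := by
    rw [Finsupp.prod_eq_single j]
    · simp [u, hij.symm]
    · intro l hl hlj
      have hli : l ≠ i := fun h => hl (h ▸ hm)
      simp [u, hli, hlj]
    · simp
  have hconj_e : (diagAut u * e * (diagAut u)⁻¹).val
      = elemEnd i (monomial m (c' * a ^ (m j + 1))) := by
    rw [diagAut_mul_elemAut_mul_inv_val, bind₁_diagAut_monomial, hweight, C_mul_monomial]
    congr 2
    simp only [u, Pi.mul_apply, Pi.mulSingle_eq_same, Pi.mulSingle_eq_of_ne hij, mul_one]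
    ring
  have hcomm : elemAut i (monomial m c) (notMem_vars_monomial hm c)
      = diagAut u * (e * (diagAut u)⁻¹ * e⁻¹) := by
    refine Units.ext ?_
    rw [← mul_assoc, ← mul_assoc, Units.val_mul, hconj_e]
    show _ = elemEnd i _ * elemEnd i (-monomial m c')
    rw [elemEnd_mul (notMem_vars_monomial hm _), elemAut_val, ← map_neg, ← map_add]
    congr 2
    have hc : c' * ((a : k) ^ (m j + 1) - 1) = c := div_mul_cancel₀ _ (sub_ne_zero.2 ha)
    linear_combination -hc
  rw [hcomm]
  exact mul_mem (hdiag u hu) (hconj e (elemAut_mem_SAutGrp _) _ (inv_mem (hdiag u hu)))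

section Membership

variable {R : Type*} [CommRing R] {n : ℕ}

lemma IsLinear.memSL {f : PolyAut R n} (hf : IsLinear f) (h1 : f ∈ SAutGrp R n) : MemSL f := by
  obtain ⟨A, hA⟩ := hf
  refine ⟨A, C_injective (Fin n) R ?_, hA⟩
  rw [← PolyEnd.jac_linEnd, ← hA, map_one]
  exact h1

lemma IsTriangular.mem_of_mem_SAutGrp [IsReduced R] {G : Subgroup (PolyAut R n)}
    (hGS : G ≤ SAutGrp R n)
    (helem : ∀ (i : Fin n) (p : MvPolynomial (Fin n) R) (hp : i ∉ p.vars), elemAut i p hp ∈ G)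
    (hdiag : ∀ u : Fin n → Rˣ, ∏ l, u l = 1 → diagAut u ∈ G)
    {f : PolyAut R n} (hf : IsTriangular f) (hf1 : f ∈ SAutGrp R n) : f ∈ G := by
  obtain ⟨a, b, hb, hu⟩ := hf.exists_diagAut_inv_mul
  have hrest : (diagAut a)⁻¹ * f ∈ G := unitriangular_mem helem hb hu
  have ha : ∏ l, a l = 1 := by
    have h := hGS hrest
    rw [← ker_jacUnit, MonoidHom.mem_ker] at h hf1
    rwa [map_mul, hf1, mul_one, map_inv, inv_eq_one, jacUnit_diagAut] at h
  simpa using mul_mem (hdiag a ha) hrest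

end Membership

namespace Subgroup

variable {G : Type*} [Group G]

theorem inv_apply_mul_mem_of_mem_closure {M : Subgroup G} {φ : G →* G}
    (hM : ∀ g, ∀ m ∈ M, φ g * m * (φ g)⁻¹ ∈ M) {S : Set G} (hS : ∀ s ∈ S, (φ s)⁻¹ * s ∈ M)
    {f : G} (hf : f ∈ closure S) : (φ f)⁻¹ * f ∈ M := by
  induction hf using closure_induction with
  | mem s hs => exact hS s hs
  | one => simp
  | mul x y _ _ hx hy =>
    have := M.mul_mem (hM y⁻¹ _ hx) hy
    simpa [mul_assoc] using this
  | inv x _ hx =>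
    have := hM x _ (M.inv_mem hx)
    simpa [mul_assoc] using this

end Subgroup

def specialTameGens (R : Type*) [CommRing R] (n : ℕ) : Set (PolyAut R n) :=
  {f | f ∈ SAutGrp R n ∧ (IsLinear f ∨ IsTriangular f)}

section Tame

variable {R : Type*} [CommRing R] {n : ℕ}

lemma diagAut_mul_mul_inv_mem_closure [IsReduced R] (u : Fin n → Rˣ) {f : PolyAut R n}
    (hf : f ∈ Subgroup.closure (specialTameGens R n)) :
    diagAut u * f * (diagAut u)⁻¹ ∈ Subgroup.closure (specialTameGens R n) := by
  suffices Subgroup.closure (specialTameGens R n)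
      ≤ (Subgroup.closure (specialTameGens R n)).comap (MulAut.conj (diagAut u)).toMonoidHom from
    this hf
  rw [Subgroup.closure_le]
  rintro g ⟨hg1, hg⟩
  rw [SetLike.mem_coe, Subgroup.mem_comap, MulEquiv.coe_toMonoidHom, MulAut.conj_apply]
  refine Subgroup.subset_closure ⟨Subgroup.Normal.conj_mem inferInstance g hg1 _, ?_⟩
  rw [← map_inv]
  exact hg.imp (fun h => ((isLinear_diagAut u).mul h).mul (isLinear_diagAut _))
    (fun h => ((isTriangular_diagAut u).mul h).mul (isTriangular_diagAut _))

lemma mem_closure_specialTameGens [IsReduced R] (i₀ : Fin n) {f : PolyAut R n}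
    (hf : f ∈ TameGrp R n) (hf1 : f ∈ SAutGrp R n) :
    f ∈ Subgroup.closure (specialTameGens R n) := by
  -- `φ f = diag(Jac f, 1, …, 1)`
  set φ : PolyAut R n →* PolyAut R n := (diagAut.comp (MonoidHom.mulSingle _ i₀)).comp jacUnit
  have hφ : ∀ g, jacUnit (φ g) = jacUnit g := by
    intro g
    simp [φ, jacUnit_diagAut, Finset.prod_pi_mulSingle']
  have hφf : φ f = 1 := by
    rw [← ker_jacUnit, MonoidHom.mem_ker] at hf1
    simp [φ, hf1]
  have hgen : ∀ s ∈ {g : PolyAut R n | IsLinear g ∨ IsTriangular g},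
      (φ s)⁻¹ * s ∈ Subgroup.closure (specialTameGens R n) := by
    intro s hs
    refine Subgroup.subset_closure ⟨?_, ?_⟩
    · rw [← ker_jacUnit, MonoidHom.mem_ker, map_mul, map_inv, hφ, inv_mul_cancel]
    · rw [← map_inv]
      exact hs.imp (isLinear_diagAut _).mul (isTriangular_diagAut _).mul
  have key := Subgroup.inv_apply_mul_mem_of_mem_closure (φ := φ)
    (fun g m hm => diagAut_mul_mul_inv_mem_closure _ hm) hgen hf
  rwa [hφf, inv_one, one_mul] at key

end Tame

lemma closure_specialTameGens_le_map {k : Type*} [Field k] [Infinite k] {n : ℕ} (hn : 2 ≤ n)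
    {N : Subgroup ↥(SAutGrp k n)} (hnorm : N.Normal)
    (hSL : ∀ f : ↥(SAutGrp k n), MemSL (f : PolyAut k n) → f ∈ N) :
    Subgroup.closure (specialTameGens k n) ≤ N.map (SAutGrp k n).subtype := by
  have hsl : ∀ f ∈ SAutGrp k n, MemSL f → f ∈ N.map (SAutGrp k n).subtype :=
    fun f hf h => ⟨⟨f, hf⟩, hSL _ h, rfl⟩
  have hconj : ∀ g ∈ SAutGrp k n, ∀ x ∈ N.map (SAutGrp k n).subtype,
      g * x * g⁻¹ ∈ N.map (SAutGrp k n).subtype := by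
    rintro g hg _ ⟨x, hx, rfl⟩
    exact ⟨_, hnorm.conj_mem x hx ⟨g, hg⟩, by simp⟩
  have hdiag : ∀ u : Fin n → kˣ, ∏ l, u l = 1 → diagAut u ∈ N.map (SAutGrp k n).subtype := by
    intro u hu
    have h1 : diagAut u ∈ SAutGrp k n := by
      rw [← ker_jacUnit, MonoidHom.mem_ker, jacUnit_diagAut, hu]
    exact hsl _ h1 ((isLinear_diagAut u).memSL h1)
  have helem : ∀ (i : Fin n) (p : MvPolynomial (Fin n) k) (hp : i ∉ p.vars),
      elemAut i p hp ∈ N.map (SAutGrp k n).subtype := by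
    intro i p hp
    have : Nontrivial (Fin n) := Fin.nontrivial_iff_two_le.2 hn
    obtain ⟨j, hji⟩ := exists_ne i
    exact elemAut_mem_of_forall_monomial
      (fun m c hm => elemAut_monomial_mem hconj hdiag hji.symm m c hm) hp
  rw [Subgroup.closure_le]
  rintro f ⟨hf1, hlin | htri⟩
  · exact hsl f hf1 (hlin.memSL hf1)
  · exact htri.mem_of_mem_SAutGrp (Subgroup.map_subtype_le N) helem hdiag hf1

/-- **Proposition (Lewis).**  Let `k` be an infinite field, `n ≥ 2`.  Every normal subgroup of
`SAut_k(𝔸ⁿ)` containing `SL_n(k)` contains every tame automorphism of Jacobian 1. -/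
theorem sautgrp_normal_SL_contains_tame {k : Type*} [Field k] [Infinite k] {n : ℕ}
    (hn : 2 ≤ n) (N : Subgroup ↥(SAutGrp k n)) (hnorm : N.Normal)
    (hSL : ∀ f : ↥(SAutGrp k n), MemSL (f : PolyAut k n) → f ∈ N) :
    ∀ f : ↥(SAutGrp k n), (f : PolyAut k n) ∈ TameGrp k n → f ∈ N := by
  intro f hf
  have hspecial := mem_closure_specialTameGens ⟨0, by omega⟩ hf f.2
  exact (Subgroup.mem_map_iff_mem (SAutGrp k n).subtype_injective).1
    (closure_specialTameGens_le_map hn hnorm hSL hspecial)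
end

section
/- Let k be an infinite field and let V ⊆ k[x] be the k-linear subspace spanned by the set {s(x) − a·s(ax+b) : s ∈ k[x], a ∈ k^*, b ∈ k}. Then V = k[x]. -/
open Polynomial in
/-- The `k`-linear subspace of `k[x]` spanned by the polynomials `s(x) - a·s(ax+b)`
for `s ∈ k[x]`, `a ∈ k^*`, `b ∈ k`. -/
noncomputable def Vspan (k : Type*) [Field k] : Submodule k (Polynomial k) :=
  Submodule.span k {p : Polynomial k | ∃ (s : Polynomial k) (a b : k), a ≠ 0 ∧
    p = s - C a * s.comp (C a * X + C b)}

/-! Taking `s = xⁿ` and `b = 0` gives `(1 - aⁿ⁺¹) xⁿ ∈ V`; over an infinite field some `a ≠ 0`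
is not an `(n+1)`-st root of unity, so `xⁿ ∈ V` for every `n`, and the monomials span `k[x]`. -/

open Polynomial

lemma X_pow_sub_C_mul_X_pow_comp_C_mul_X {R : Type*} [CommRing R] (a : R) (n : ℕ) :
    (X ^ n : R[X]) - C a * (X ^ n).comp (C a * X) = C (1 - a ^ (n + 1)) * X ^ n := by
  simp only [pow_comp, X_comp, mul_pow, ← C_pow, map_sub, map_one, pow_succ, C_mul]
  ring

lemma exists_ne_zero_pow_ne_one {k : Type*} [Field k] [Infinite k] {m : ℕ} (hm : m ≠ 0) :
    ∃ a : k, a ≠ 0 ∧ a ^ m ≠ 1 := by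
  classical
  obtain ⟨a, ha⟩ := Infinite.exists_notMem_finset (insert 0 (nthRoots m (1 : k)).toFinset)
  rw [Finset.mem_insert, Multiset.mem_toFinset, mem_nthRoots (Nat.pos_of_ne_zero hm)] at ha
  exact ⟨a, not_or.1 ha⟩

namespace Vspan

variable {k : Type*} [Field k]

lemma sub_C_mul_comp_mem (s : k[X]) {a : k} (ha : a ≠ 0) (b : k) :
    s - C a * s.comp (C a * X + C b) ∈ Vspan k :=
  Submodule.subset_span ⟨s, a, b, ha, rfl⟩

lemma X_pow_mem [Infinite k] (n : ℕ) : (X ^ n : k[X]) ∈ Vspan k := by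
  obtain ⟨a, ha0, ha⟩ := exists_ne_zero_pow_ne_one (k := k) n.succ_ne_zero
  have hmem : C (1 - a ^ (n + 1)) * X ^ n ∈ Vspan k := by
    simpa only [map_zero, add_zero, X_pow_sub_C_mul_X_pow_comp_C_mul_X] using
      sub_C_mul_comp_mem (X ^ n) ha0 0
  rw [← smul_eq_C_mul] at hmem
  simpa only [smul_smul, inv_mul_cancel₀ (sub_ne_zero.2 (Ne.symm ha)), one_smul] using
    Submodule.smul_mem _ (1 - a ^ (n + 1))⁻¹ hmem

end Vspan

open Polynomial in
/-- **Lemma.**  If `k` is an infinite field, then the span `V` of the polynomials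
`s(x) - a·s(ax+b)` is all of `k[x]`. -/
theorem Vspan_eq_top_of_infinite {k : Type*} [Field k] [Infinite k] :
    Vspan k = ⊤ := by
  refine Submodule.eq_top_iff'.2 fun p => ?_
  induction p using Polynomial.induction_on' with
  | add p q hp hq => exact add_mem hp hq
  | monomial n c =>
    rw [← C_mul_X_pow_eq_monomial, ← smul_eq_C_mul]
    exact Submodule.smul_mem _ c (Vspan.X_pow_mem n)
end

section
/- Let k be a finite field with q elements and let V ⊆ k[x] be the k-linear subspace spanned by the set {s(x) − a·s(ax+b) : s ∈ k[x], a ∈ k^*, b ∈ k}. Then the images in the quotient k-vector space k[x]/V of the polynomials x^{q−1}·(x^q − x)^{m(q−1)−1}, for m = 1, 2, 3, …, are linearly independent over k. In particular, k[x]/V is infinite-dimensional as a k-vector space. -/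
/-!
Let `G = X^q - X` and `M = (m+1)(q-1)`. A substitution `X ↦ aX + b` with `a ≠ 0` multiplies `G` by
`a`, hence fixes `G^M`; so it commutes with reduction modulo `G^M`, and on remainders (of degree
`< qM`) it multiplies the coefficient of `X^(qM-1)` by `a^(qM-1) = a⁻¹`. Therefore the functional
`ℓ_m : p ↦ [X^(qM-1)] (p mod G^M)` kills every `s - a·s(aX+b)`, i.e. vanishes on `V`.
The `m`-th polynomial `P_m = X^(q-1) G^(M-1)` is monic of degree `qM-1`; for `j < m` the
polynomial `P_j` has smaller degree and for `j > m` it is divisible by `G^M`. Hence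
`ℓ_m(P_j) = δ_{jm}`, and the `ℓ_m` form a dual family to the classes of the `P_m` in `k[x]/V`.
-/

open Polynomial

namespace Polynomial

variable {R : Type*} [CommRing R]

theorem natDegree_comp_le_of_natDegree_le_one {p r : R[X]} (hr : r.natDegree ≤ 1) :
    (p.comp r).natDegree ≤ p.natDegree :=
  natDegree_comp_le.trans (mul_le_of_le_one_right (Nat.zero_le _) hr)

theorem comp_modByMonic_of_dvd_comp {G r : R[X]} (hG : G.Monic) (hr : r.natDegree ≤ 1)
    (hGr : G ∣ G.comp r) (p : R[X]) : p.comp r %ₘ G = (p %ₘ G).comp r := by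
  nontriviality R
  rcases eq_or_ne G 1 with rfl | hG1
  · simp [modByMonic_one]
  have hdeg : ((p %ₘ G).comp r).natDegree < G.natDegree :=
    (natDegree_comp_le_of_natDegree_le_one hr).trans_lt (natDegree_modByMonic_lt p hG hG1)
  have hdvd : G ∣ p.comp r - (p %ₘ G).comp r := by
    rw [← sub_comp, modByMonic_eq_sub_mul_div p G, sub_sub_cancel, mul_comp]
    exact hGr.mul_right _
  rw [modByMonic_eq_of_dvd_sub hG hdvd, (modByMonic_eq_self_iff hG).2 (degree_lt_degree hdeg)]

theorem coeff_comp_linear_of_natDegree_le {p : R[X]} {n : ℕ} {a : R} (b : R) (ha : a ≠ 0)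
    (hp : p.natDegree ≤ n) : (p.comp (C a * X + C b)).coeff n = a ^ n * p.coeff n := by
  rcases hp.lt_or_eq with hlt | rfl
  · have hcomp : (p.comp (C a * X + C b)).natDegree < n :=
      (natDegree_comp_le_of_natDegree_le_one natDegree_linear_le).trans_lt hlt
    rw [coeff_eq_zero_of_natDegree_lt hcomp, coeff_eq_zero_of_natDegree_lt hlt, mul_zero]
  · have h := coeff_comp_degree_mul_degree (p := p) (q := C a * X + C b)
      (by rw [natDegree_linear ha]; exact one_ne_zero)
    rw [natDegree_linear ha, mul_one, leadingCoeff_linear ha] at h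
    rw [h, mul_comm, leadingCoeff]

noncomputable def subleadingCoeffMod (G : R[X]) : R[X] →ₗ[R] R :=
  (lcoeff R (G.natDegree - 1)).comp (modByMonicHom G)

theorem subleadingCoeffMod_apply (G p : R[X]) :
    subleadingCoeffMod G p = (p %ₘ G).coeff (G.natDegree - 1) := rfl

theorem subleadingCoeffMod_eq_coeff {G p : R[X]} (hG : G.Monic) (hp : p.degree < G.degree) :
    subleadingCoeffMod G p = p.coeff (G.natDegree - 1) := by
  nontriviality R
  rw [subleadingCoeffMod_apply, (modByMonic_eq_self_iff hG).2 hp]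

theorem subleadingCoeffMod_eq_zero_of_dvd {G p : R[X]} (hG : G.Monic) (h : G ∣ p) :
    subleadingCoeffMod G p = 0 := by
  rw [subleadingCoeffMod_apply, (modByMonic_eq_zero_iff_dvd hG).2 h, coeff_zero]

theorem subleadingCoeffMod_sub_C_mul_comp {G : R[X]} (hG : G.Monic) {a : R} (b : R)
    (ha : a ^ G.natDegree = 1) (hGr : G ∣ G.comp (C a * X + C b)) (p : R[X]) :
    subleadingCoeffMod G (p - C a * p.comp (C a * X + C b)) = 0 := by
  nontriviality R
  rcases eq_or_ne G 1 with rfl | hG1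
  · simp [subleadingCoeffMod_apply, modByMonic_one]
  have hN : G.natDegree - 1 + 1 = G.natDegree := Nat.sub_add_cancel (hG.natDegree_pos.2 hG1)
  have ha0 : a ≠ 0 := by
    rintro rfl
    simp [zero_pow (hG.natDegree_pos.2 hG1).ne'] at ha
  have hdeg : (p %ₘ G).natDegree ≤ G.natDegree - 1 :=
    Nat.le_sub_one_of_lt (natDegree_modByMonic_lt p hG hG1)
  rw [map_sub, ← smul_eq_C_mul, map_smul, subleadingCoeffMod_apply, subleadingCoeffMod_apply,
    comp_modByMonic_of_dvd_comp hG natDegree_linear_le hGr,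
    coeff_comp_linear_of_natDegree_le b ha0 hdeg, smul_eq_mul, ← mul_assoc, ← pow_succ', hN, ha,
    one_mul, sub_self]

end Polynomial

namespace FiniteField

variable {K : Type*} [Field K] [Fintype K]

theorem monic_X_pow_card_sub_X : (X ^ Fintype.card K - X : K[X]).Monic :=
  monic_X_pow_sub (by rw [degree_X]; exact_mod_cast Fintype.one_lt_card)

theorem X_pow_card_sub_X_comp_linear (a b : K) :
    (X ^ Fintype.card K - X : K[X]).comp (C a * X + C b) = C a * (X ^ Fintype.card K - X) := by
  rw [sub_comp, X_pow_comp, X_comp, ← expand_card, map_add, map_mul, expand_C, expand_C, expand_X]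
  ring

end FiniteField

section

variable (k : Type*) [Field k] [Fintype k]

local notation "q" => Fintype.card k

/-- The exponent is a multiple of `q - 1`, so the substitutions `X ↦ aX + b`, which multiply
`X^q - X` by `a`, fix this polynomial. -/
noncomputable def affineModulus (m : ℕ) : k[X] := (X ^ q - X) ^ ((m + 1) * (q - 1))

noncomputable def indepPoly (m : ℕ) : k[X] := X ^ (q - 1) * (X ^ q - X) ^ ((m + 1) * (q - 1) - 1)

variable {k}

theorem affineModulus_monic (m : ℕ) : (affineModulus k m).Monic :=
  FiniteField.monic_X_pow_card_sub_X.pow _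

theorem natDegree_affineModulus (m : ℕ) :
    (affineModulus k m).natDegree = q * ((m + 1) * (q - 1)) := by
  rw [affineModulus, FiniteField.monic_X_pow_card_sub_X.natDegree_pow,
    FiniteField.X_pow_card_sub_X_natDegree_eq k Fintype.one_lt_card, mul_comm]

theorem indepPoly_monic (m : ℕ) : (indepPoly k m).Monic :=
  (monic_X_pow _).mul (FiniteField.monic_X_pow_card_sub_X.pow _)

theorem natDegree_indepPoly_add_one (m : ℕ) :
    (indepPoly k m).natDegree + 1 = (affineModulus k m).natDegree := by
  have hq : 1 < q := Fintype.one_lt_card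
  have hM : 1 ≤ (m + 1) * (q - 1) := Nat.mul_pos m.succ_pos (Nat.sub_pos_of_lt hq)
  rw [indepPoly, (monic_X_pow _).natDegree_mul (FiniteField.monic_X_pow_card_sub_X.pow _),
    natDegree_X_pow, FiniteField.monic_X_pow_card_sub_X.natDegree_pow,
    FiniteField.X_pow_card_sub_X_natDegree_eq k hq, natDegree_affineModulus]
  obtain ⟨n, hn⟩ := Nat.exists_eq_add_of_le hM
  rw [hn, Nat.add_sub_cancel_left, mul_add, mul_one, mul_comm n q]
  omega

theorem affineModulus_dvd_indepPoly {i j : ℕ} (h : i < j) : affineModulus k i ∣ indepPoly k j := by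
  refine Dvd.dvd.mul_left (pow_dvd_pow _ ?_) _
  have : (i + 1) * (q - 1) + (q - 1) ≤ (j + 1) * (q - 1) := by nlinarith
  have : 1 ≤ q - 1 := Nat.le_sub_one_of_lt Fintype.one_lt_card
  omega

theorem natDegree_affineModulus_strictMono : StrictMono fun m ↦ (affineModulus k m).natDegree := by
  have hq : 1 < q := Fintype.one_lt_card
  intro i j h
  simp only [natDegree_affineModulus]
  gcongr
  omega

theorem subleadingCoeffMod_affineModulus_indepPoly (i j : ℕ) :
    subleadingCoeffMod (affineModulus k i) (indepPoly k j) = if i = j then 1 else 0 := by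
  have hi := natDegree_indepPoly_add_one (k := k) i
  have hj := natDegree_indepPoly_add_one (k := k) j
  rcases lt_trichotomy i j with h | rfl | h
  · rw [if_neg h.ne, subleadingCoeffMod_eq_zero_of_dvd (affineModulus_monic i)
      (affineModulus_dvd_indepPoly h)]
  · rw [if_pos rfl, subleadingCoeffMod_eq_coeff (affineModulus_monic i)
      (degree_lt_degree (by omega)), ← hi, Nat.add_sub_cancel,
      (indepPoly_monic i).coeff_natDegree]
  · have : (affineModulus k j).natDegree < (affineModulus k i).natDegree :=
      natDegree_affineModulus_strictMono h
    rw [if_neg h.ne', subleadingCoeffMod_eq_coeff (affineModulus_monic i)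
      (degree_lt_degree (by omega)), coeff_eq_zero_of_natDegree_lt (by omega)]

theorem Vspan_le_ker_subleadingCoeffMod (m : ℕ) :
    Vspan k ≤ LinearMap.ker (subleadingCoeffMod (affineModulus k m)) := by
  rw [Vspan, Submodule.span_le]
  rintro _ ⟨s, a, b, ha, rfl⟩
  have hM : a ^ ((m + 1) * (q - 1)) = 1 := by
    rw [mul_comm, pow_mul, FiniteField.pow_card_sub_one_eq_one a ha, one_pow]
  have hcomp : (affineModulus k m).comp (C a * X + C b) = affineModulus k m := by
    rw [affineModulus, pow_comp, FiniteField.X_pow_card_sub_X_comp_linear, mul_pow, ← C_pow, hM,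
      C_1, one_mul]
  refine subleadingCoeffMod_sub_C_mul_comp (affineModulus_monic m) b ?_ hcomp.symm.dvd s
  rw [natDegree_affineModulus, pow_mul', hM, one_pow]

end

open Polynomial in
/-- **Lemma.**  If `k` is a finite field with `q` elements, then the classes of the polynomials
`x^{q-1}·(x^q-x)^{m(q-1)-1}`, `m ≥ 1`, in `k[x]/V` are linearly independent; in particular
`k[x]/V` is infinite-dimensional over `k`. -/
theorem Vspan_quotient_linearIndependent {k : Type*} [Field k] [Fintype k] :
    LinearIndependent k (fun m : ℕ =>
      Submodule.Quotient.mk (p := Vspan k)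
        (X ^ (Fintype.card k - 1) *
          (X ^ Fintype.card k - X) ^ ((m + 1) * (Fintype.card k - 1) - 1))) ∧
    ¬ Module.Finite k (Polynomial k ⧸ Vspan k) := by
  have hLI : LinearIndependent k fun m => (Vspan k).mkQ (indepPoly k m) :=
    .of_pairwise_dual_eq_zero_one _
      (fun i => (Vspan k).liftQ _ (Vspan_le_ker_subleadingCoeffMod i))
      (fun i j hij => by simp [subleadingCoeffMod_affineModulus_indepPoly, hij])
      (fun i => by simp [subleadingCoeffMod_affineModulus_indepPoly])
  exact ⟨hLI, fun _ => Module.Finite.not_linearIndependent_of_infinite _ hLI⟩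
end

section
/- Let k = F_2 be the field with two elements and let V ⊆ k[x] be the k-linear subspace spanned by the set {s(x) − a·s(ax+b) : s ∈ k[x], a ∈ k^*, b ∈ k} (over F_2, this is the span of {s(x) + s(x+1) : s ∈ F_2[x]}). Then V = {p(x² + x) : p ∈ F_2[y]}, i.e. V equals the subalgebra F_2[x(x+1)] of F_2[x]. In particular, x ∉ V. -/
open Polynomial

section CommRing

variable {R : Type*} [CommRing R]

theorem exists_eq_comp_X_sq_add_X_add_X_mul_comp (s : R[X]) :
    ∃ A B : R[X], s = A.comp (X ^ 2 + X) + X * B.comp (X ^ 2 + X) := by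
  induction s using Polynomial.induction_on with
  | C a => exact ⟨C a, 0, by simp⟩
  | add p q hp hq =>
    obtain ⟨A, B, rfl⟩ := hp
    obtain ⟨A', B', rfl⟩ := hq
    exact ⟨A + A', B + B', by simp only [add_comp]; ring⟩
  | monomial n a h =>
    obtain ⟨A, B, hs⟩ := h
    refine ⟨X * B, A - B, ?_⟩
    rw [pow_succ, ← mul_assoc, hs, mul_comp, sub_comp, X_comp]
    ring

theorem comp_X_sq_add_X_ne_X [Nontrivial R] (q : R[X]) : q.comp (X ^ 2 + X) ≠ X := by
  intro h
  have h0 := congrArg (eval 0) h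
  have h1 := congrArg (eval (-1)) h
  simp only [eval_comp, eval_add, eval_pow, eval_X] at h0 h1
  norm_num at h0 h1
  exact one_ne_zero (neg_eq_zero.mp (h1.symm.trans h0))

end CommRing

section CharTwo

variable {R : Type*} [CommRing R] [CharP R 2]

theorem X_sq_add_X_comp_X_add_one : (X ^ 2 + X : R[X]).comp (X + 1) = X ^ 2 + X := by
  simp only [add_comp, pow_comp, X_comp]
  linear_combination (X + 1 : R[X]) * (CharTwo.two_eq_zero : (2 : R[X]) = 0)

theorem sub_comp_X_add_one_of_eq {s : R[X]} (A B : R[X])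
    (hs : s = A.comp (X ^ 2 + X) + X * B.comp (X ^ 2 + X)) :
    s - s.comp (X + 1) = B.comp (X ^ 2 + X) := by
  subst hs
  rw [add_comp, mul_comp, X_comp, comp_assoc, comp_assoc, X_sq_add_X_comp_X_add_one]
  linear_combination -B.comp (X ^ 2 + X) * (CharTwo.two_eq_zero : (2 : R[X]) = 0)

theorem exists_comp_X_sq_add_X_eq_sub_comp_X_add_one (s : R[X]) :
    ∃ q : R[X], q.comp (X ^ 2 + X) = s - s.comp (X + 1) := by
  obtain ⟨A, B, hs⟩ := exists_eq_comp_X_sq_add_X_add_X_mul_comp s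
  exact ⟨B, (sub_comp_X_add_one_of_eq A B hs).symm⟩

end CharTwo

theorem Vspan_zmod_two_eq_range :
    Vspan (ZMod 2) = LinearMap.range (aeval (X ^ 2 + X : (ZMod 2)[X])).toLinearMap := by
  apply le_antisymm
  · refine Submodule.span_le.mpr ?_
    rintro p ⟨s, a, b, ha, rfl⟩
    obtain rfl : a = 1 := by revert a; decide
    obtain ⟨q, hq⟩ := exists_comp_X_sq_add_X_eq_sub_comp_X_add_one s
    obtain rfl | rfl : b = 0 ∨ b = 1 := by revert b; decide
    · exact ⟨0, by rw [C_0, add_zero, C_1, one_mul, one_mul, comp_X, sub_self, map_zero]⟩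
    · refine ⟨q, ?_⟩
      rw [C_1, one_mul, one_mul, AlgHom.toLinearMap_apply, ← comp_eq_aeval, hq]
  · rintro _ ⟨q, rfl⟩
    refine Submodule.subset_span ⟨X * q.comp (X ^ 2 + X), 1, 1, one_ne_zero, ?_⟩
    rw [C_1, one_mul, one_mul, AlgHom.toLinearMap_apply, ← comp_eq_aeval]
    exact (sub_comp_X_add_one_of_eq 0 q (by rw [zero_comp, zero_add])).symm

open Polynomial in
/-- **Lemma.**  For `k = 𝔽₂`, the span `V` of the polynomials `s(x) + s(x+1)` equals the
subalgebra `𝔽₂[x(x+1)] = {p(x²+x)}` of `𝔽₂[x]`; in particular `x ∉ V`. -/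
theorem Vspan_F2_eq_comp_range :
    ((Vspan (ZMod 2) : Submodule (ZMod 2) (Polynomial (ZMod 2))) : Set (Polynomial (ZMod 2)))
        = Set.range (fun q : Polynomial (ZMod 2) => q.comp (X ^ 2 + X)) ∧
      (X : Polynomial (ZMod 2)) ∉ Vspan (ZMod 2) := by
  have hV : ((Vspan (ZMod 2) : Submodule (ZMod 2) (ZMod 2)[X]) : Set (ZMod 2)[X])
      = Set.range (fun q : (ZMod 2)[X] => q.comp (X ^ 2 + X)) := by
    rw [Vspan_zmod_two_eq_range, LinearMap.coe_range]
    exact congrArg Set.range (funext fun q => comp_eq_aeval.symm)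
  refine ⟨hV, fun hX => ?_⟩
  obtain ⟨q, hq⟩ : X ∈ Set.range (fun q : (ZMod 2)[X] => q.comp (X ^ 2 + X)) := hV ▸ hX
  exact comp_X_sq_add_X_ne_X q hq
end
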